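/- Let 0 < α ≤ 1, 0 < ρ ≤ 1, β > 0, γ ≥ 0 and λ, μ > 0. Then for every w > 0 such that β < w^α and |λ − μ| < w^ρ (1 − β w^{-α})^{γ}, one has ∫_0^∞ e^{-wt} Σ_{k=0}^∞ (λ−μ)^k t^{kρ} E_{α,kρ+1}^{kγ}(-β t^α) dt = w^{ρ-1}(1 + β w^{-α})^{γ} / ( w^{ρ}(1 + β w^{-α})^{γ} − (λ − μ) ), the series converging absolutely and being integrable term by term. -/

import Mathlib

/-!
Expanding the Mittag-Leffler function, `meanTerm k t = ∑ⱼ c(k,j) t ^ (kρ + jα)` where `c(k,j)`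
carries the factor `1 / Γ(kρ + jα + 1)`. The Laplace transform of `t ^ s` is `Γ(s+1) / w ^ (s+1)`,
so transforming term by term cancels the Gamma factors, and the sum over `j` becomes the binomial
series `∑ⱼ (kγ)ⱼ yʲ / j! = (1 - y) ^ (-kγ)` at `y = -β w^(-α)`. What remains is a geometric
series in `k` with ratio `(λ - μ) / (w^ρ (1 + β w^(-α))^γ)`. With absolute values the same
computation gives the ratio `|λ - μ| / (w^ρ (1 - β w^(-α))^γ) < 1`, which justifies the
interchanges; pointwise absolute convergence follows from `x ^ s e^(-x) ≤ Γ(s+1)`.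
-/

open MeasureTheory Real

/-- Pochhammer symbol `(g)_k = g (g+1) ⋯ (g+k-1)`. -/
noncomputable def poch (g : ℝ) (k : ℕ) : ℝ := ∏ i ∈ Finset.range k, (g + i)

/-- Three-parameter (Prabhakar) Mittag-Leffler function. -/
noncomputable def ml3 (a b g x : ℝ) : ℝ :=
  ∑' k : ℕ, poch g k * x ^ k / (Real.Gamma ((k : ℝ) * a + b) * (Nat.factorial k : ℝ))

/-- The `k`-th term of the series giving the mean of the GFLBDP. -/
noncomputable def meanTerm (α ρ β γ lam mu : ℝ) (k : ℕ) (t : ℝ) : ℝ :=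
  (lam - mu) ^ k * t ^ ((k : ℝ) * ρ) * ml3 α ((k : ℝ) * ρ + 1) ((k : ℝ) * γ) (-β * t ^ α)

open Set Filter

lemma poch_nonneg {g : ℝ} (hg : 0 ≤ g) (j : ℕ) : 0 ≤ poch g j :=
  Finset.prod_nonneg fun i _ ↦ by positivity

lemma poch_eq_ascPochhammer_eval (g : ℝ) (j : ℕ) : poch g j = (ascPochhammer ℝ j).eval g := by
  induction j with
  | zero => simp [poch]
  | succ j ih => rw [poch, Finset.prod_range_succ, ← poch, ih, ascPochhammer_succ_eval]

lemma choose_eq_poch_div_factorial (g : ℝ) (j : ℕ) :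
    Ring.choose (g + j - 1) j = poch g j / j.factorial := by
  rw [Ring.choose_eq_smul, Polynomial.descPochhammer_smeval_eq_ascPochhammer,
    Polynomial.ascPochhammer_smeval_eq_eval, poch_eq_ascPochhammer_eval, smul_eq_mul,
    inv_mul_eq_div]
  congr 2
  ring

lemma hasSum_poch_mul_pow_div_factorial (g : ℝ) {x : ℝ} (hx : |x| < 1) :
    HasSum (fun j : ℕ => poch g j * x ^ j / j.factorial) ((1 - x) ^ (-g)) := by
  have h := (one_div_one_sub_rpow_hasFPowerSeriesOnBall_zero g).hasSum
    (y := x) (by simpa [enorm_eq_nnnorm, ← NNReal.coe_lt_coe] using hx)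
  have h1x : 0 ≤ 1 - x := by linarith [le_abs_self x]
  simp only [FormalMultilinearSeries.ofScalars_apply_eq, zero_add,
    choose_eq_poch_div_factorial] at h
  rw [rpow_neg h1x, inv_eq_one_div]
  simpa only [smul_eq_mul, div_mul_eq_mul_div] using h

theorem integrable_tsum_of_summable_integral_norm {α E ι : Type*} [MeasurableSpace α]
    {μ : Measure α} [NormedAddCommGroup E] [CompleteSpace E] [Countable ι] {F : ι → α → E}
    (hF_int : ∀ i, Integrable (F i) μ) (hF_sum : Summable fun i ↦ ∫ a, ‖F i a‖ ∂μ) :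
    Integrable (fun a ↦ ∑' i, F i a) μ := by
  have hlint : ∀ i, ∫⁻ a, ‖F i a‖ₑ ∂μ = ENNReal.ofReal (∫ a, ‖F i a‖ ∂μ) := fun i ↦
    (ofReal_integral_norm_eq_lintegral_enorm (hF_int i)).symm
  have hfin : ∫⁻ a, ∑' i, ‖F i a‖ₑ ∂μ < ⊤ := by
    rw [lintegral_tsum fun i ↦ (hF_int i).1.enorm, tsum_congr hlint,
      ← ENNReal.ofReal_tsum_of_nonneg (fun i ↦ integral_nonneg fun a ↦ norm_nonneg _) hF_sum]
    exact ENNReal.ofReal_lt_top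
  have hsum : ∀ᵐ a ∂μ, Summable fun i ↦ F i a := by
    filter_upwards [ae_lt_top' (AEMeasurable.tsum fun i ↦ (hF_int i).1.enorm) hfin.ne]
      with a ha
    exact Summable.of_nnnorm (ENNReal.tsum_coe_ne_top_iff_summable.1 ha.ne)
  refine ⟨aestronglyMeasurable_of_tendsto_ae atTop (fun s ↦ ?_) (hsum.mono fun a h ↦ h.hasSum),
    hfin.trans_le' (lintegral_mono fun a ↦ enorm_tsum_le_tsum_enorm)⟩
  exact Finset.aestronglyMeasurable_fun_sum s fun i _ ↦ (hF_int i).1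

lemma rpow_mul_exp_neg_le_Gamma {s x : ℝ} (hs : 0 ≤ s) (hx : 0 ≤ x) :
    x ^ s * exp (-x) ≤ Gamma (s + 1) := by
  have hint : IntegrableOn (fun u ↦ exp (-u) * u ^ s) (Ioi 0) := by
    simpa using GammaIntegral_convergent (by linarith : 0 < s + 1)
  calc x ^ s * exp (-x) = ∫ u in Ioi x, exp (-u) * x ^ s := by
        rw [integral_mul_const, integral_exp_neg_Ioi, mul_comm]
    _ ≤ ∫ u in Ioi x, exp (-u) * u ^ s := by
        refine setIntegral_mono_on ((exp_neg_integrableOn_Ioi x one_pos).congr_fun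
          (fun u _ ↦ by simp) measurableSet_Ioi |>.mul_const _)
          (hint.mono_set (Ioi_subset_Ioi hx)) measurableSet_Ioi fun u hu ↦ ?_
        gcongr
        exact mem_Ioi.1 hu |>.le
    _ ≤ ∫ u in Ioi 0, exp (-u) * u ^ s := by
        refine setIntegral_mono_set hint ?_ (Ioi_subset_Ioi hx).eventuallyLE
        filter_upwards [ae_restrict_mem measurableSet_Ioi] with u hu
        have : 0 ≤ u := le_of_lt hu
        positivity
    _ = Gamma (s + 1) := by
        rw [Gamma_eq_integral (by linarith)]
        simp

lemma rpow_le_mul_exp_mul_Gamma_div {s t w : ℝ} (hs : 0 ≤ s) (ht : 0 ≤ t) (hw : 0 < w) :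
    t ^ s ≤ w * exp (w * t) * (Gamma (s + 1) / w ^ (s + 1)) := by
  have h := rpow_mul_exp_neg_le_Gamma hs (mul_nonneg hw.le ht)
  rw [mul_rpow hw.le ht, exp_neg, ← div_eq_mul_inv, div_le_iff₀ (exp_pos _)] at h
  rw [rpow_add_one hw.ne', show w * exp (w * t) * (Gamma (s + 1) / (w ^ s * w))
    = Gamma (s + 1) * exp (w * t) / w ^ s by field_simp, le_div_iff₀ (rpow_pos_of_pos hw s)]
  linarith

lemma integrableOn_exp_neg_mul_mul_rpow {s w : ℝ} (hs : -1 < s) (hw : 0 < w) :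
    IntegrableOn (fun t ↦ exp (-w * t) * t ^ s) (Ioi 0) := by
  refine (integrableOn_rpow_mul_exp_neg_mul_rpow hs one_pos hw).congr_fun (fun t _ ↦ ?_)
    measurableSet_Ioi
  simp [mul_comm]

lemma integral_exp_neg_mul_mul_rpow {s w : ℝ} (hs : -1 < s) (hw : 0 < w) :
    ∫ t in Ioi 0, exp (-w * t) * t ^ s = Gamma (s + 1) / w ^ (s + 1) := by
  have h := integral_rpow_mul_exp_neg_mul_Ioi (by linarith : 0 < s + 1) hw
  rw [add_sub_cancel_right, div_rpow zero_le_one hw.le, one_rpow, one_div_mul_eq_div] at h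
  rw [← h]
  congr 1 with t
  rw [neg_mul, mul_comm]

section Laplace
variable {ι : Type*} {c e : ι → ℝ} {w : ℝ}

lemma summable_abs_mul_rpow_of_summable_laplace (he : ∀ n, 0 ≤ e n) (hw : 0 < w)
    (hsum : Summable fun n ↦ |c n| * Gamma (e n + 1) / w ^ (e n + 1)) {t : ℝ} (ht : 0 ≤ t) :
    Summable fun n ↦ |c n * t ^ e n| := by
  refine (hsum.mul_left (w * exp (w * t))).of_nonneg_of_le (fun n ↦ abs_nonneg _) fun n ↦ ?_
  rw [abs_mul, abs_of_nonneg (rpow_nonneg ht _), mul_div_assoc, mul_left_comm]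
  exact mul_le_mul_of_nonneg_left (rpow_le_mul_exp_mul_Gamma_div (he n) ht hw) (abs_nonneg _)

lemma integrableOn_and_hasSum_laplace_tsum_mul_rpow [Countable ι] (he : ∀ n, 0 ≤ e n) (hw : 0 < w)
    (hsum : Summable fun n ↦ |c n| * Gamma (e n + 1) / w ^ (e n + 1)) :
    IntegrableOn (fun t ↦ exp (-w * t) * ∑' n, c n * t ^ e n) (Ioi 0) ∧
    HasSum (fun n ↦ c n * Gamma (e n + 1) / w ^ (e n + 1))
      (∫ t in Ioi 0, exp (-w * t) * ∑' n, c n * t ^ e n) := by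
  set F : ι → ℝ → ℝ := fun n t ↦ c n * (exp (-w * t) * t ^ e n)
  have hs : ∀ n, -1 < e n := fun n ↦ by linarith [he n]
  have hF_int : ∀ n, IntegrableOn (F n) (Ioi 0) := fun n ↦
    (integrableOn_exp_neg_mul_mul_rpow (hs n) hw).const_mul (c n)
  have hF_norm : ∀ n, ∫ t in Ioi 0, ‖F n t‖ = |c n| * Gamma (e n + 1) / w ^ (e n + 1) := by
    intro n
    rw [mul_div_assoc, ← integral_exp_neg_mul_mul_rpow (hs n) hw, ← integral_const_mul]
    refine setIntegral_congr_fun measurableSet_Ioi fun t ht ↦ ?_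
    have : 0 ≤ t := le_of_lt ht
    simp only [F, norm_mul, Real.norm_eq_abs, abs_of_nonneg (exp_pos _).le,
      abs_of_nonneg (rpow_nonneg this _)]
  have hF_sum : Summable fun n ↦ ∫ t in Ioi 0, ‖F n t‖ := by simpa only [hF_norm] using hsum
  have hsum_eq : (fun t ↦ exp (-w * t) * ∑' n, c n * t ^ e n) = fun t ↦ ∑' n, F n t := by
    ext t
    rw [← tsum_mul_left]
    congr 1; ext n; ring
  rw [hsum_eq]
  refine ⟨integrable_tsum_of_summable_integral_norm hF_int hF_sum, ?_⟩
  have hF_val : ∀ n, ∫ t in Ioi 0, F n t = c n * Gamma (e n + 1) / w ^ (e n + 1) := fun n ↦ by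
    rw [integral_const_mul, integral_exp_neg_mul_mul_rpow (hs n) hw, mul_div_assoc]
  simpa only [hF_val] using hasSum_integral_of_summable_integral_norm hF_int hF_sum

end Laplace

noncomputable def meanCoeff (α ρ β γ L : ℝ) (p : ℕ × ℕ) : ℝ :=
  L ^ p.1 * (poch (p.1 * γ) p.2 * (-β) ^ p.2 / (Gamma (p.2 * α + (p.1 * ρ + 1)) * p.2.factorial))

def meanExponent (α ρ : ℝ) (p : ℕ × ℕ) : ℝ := p.1 * ρ + p.2 * α

section MeanSeries

variable {α ρ β γ L w : ℝ}

lemma meanTerm_eq_tsum (lam mu : ℝ) (k : ℕ) {t : ℝ} (ht : 0 < t) :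
    meanTerm α ρ β γ lam mu k t
      = ∑' j, meanCoeff α ρ β γ (lam - mu) (k, j) * t ^ meanExponent α ρ (k, j) := by
  rw [meanTerm, ml3, ← tsum_mul_left]
  congr 1 with j
  have htj : t ^ ((j : ℝ) * α) = (t ^ α) ^ j := by rw [mul_comm, rpow_mul_natCast ht.le]
  rw [meanExponent, meanCoeff, rpow_add ht, htj, mul_pow]
  ring

lemma meanTerm_zero_right (hρ : 0 < ρ) (lam mu : ℝ) {k : ℕ} (hk : k ≠ 0) :
    meanTerm α ρ β γ lam mu k 0 = 0 := by
  rw [meanTerm, zero_rpow (by positivity), mul_zero, zero_mul]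

lemma meanExponent_nonneg (hα : 0 ≤ α) (hρ : 0 ≤ ρ) (p : ℕ × ℕ) : 0 ≤ meanExponent α ρ p := by
  unfold meanExponent; positivity

lemma meanCoeff_mul_Gamma_div (hα : 0 ≤ α) (hρ : 0 ≤ ρ) (hw : 0 < w) (k j : ℕ) :
    meanCoeff α ρ β γ L (k, j) * Gamma (meanExponent α ρ (k, j) + 1)
        / w ^ (meanExponent α ρ (k, j) + 1)
      = L ^ k / w ^ (k * ρ + 1) * (poch (k * γ) j * (-(β / w ^ α)) ^ j / j.factorial) := by
  have hΓ : Gamma (j * α + (k * ρ + 1)) ≠ 0 := (Gamma_pos_of_pos (by positivity)).ne'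
  rw [meanExponent, show (k : ℝ) * ρ + j * α + 1 = j * α + (k * ρ + 1) by ring,
    rpow_add hw, mul_comm (j : ℝ) α, rpow_mul_natCast hw.le, meanCoeff, ← neg_div, div_pow]
  field_simp

lemma abs_meanCoeff_mul_Gamma_div (hα : 0 ≤ α) (hρ : 0 ≤ ρ) (hγ : 0 ≤ γ) (hw : 0 < w)
    (k j : ℕ) :
    |meanCoeff α ρ β γ L (k, j)| * Gamma (meanExponent α ρ (k, j) + 1)
        / w ^ (meanExponent α ρ (k, j) + 1)
      = |L| ^ k / w ^ (k * ρ + 1) * (poch (k * γ) j * (|β| / w ^ α) ^ j / j.factorial) := by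
  have hΓ : 0 < Gamma (meanExponent α ρ (k, j) + 1) :=
    Gamma_pos_of_pos (by linarith [meanExponent_nonneg hα hρ (k, j)])
  have hwα : 0 < w ^ α := rpow_pos_of_pos hw α
  have hwe : 0 < w ^ (meanExponent α ρ (k, j) + 1) := rpow_pos_of_pos hw _
  have hwk : 0 < w ^ (k * ρ + 1 : ℝ) := rpow_pos_of_pos hw _
  have h := congrArg abs (meanCoeff_mul_Gamma_div (β := β) (γ := γ) (L := L) hα hρ hw k j)
  simpa only [abs_div, abs_mul, abs_pow, abs_neg, Nat.abs_cast, abs_of_pos hΓ, abs_of_pos hwα,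
    abs_of_pos hwe, abs_of_pos hwk, abs_of_nonneg (poch_nonneg (by positivity : 0 ≤ k * γ) j)]
    using h

lemma hasSum_pow_div_rpow_mul_poch_series (ρ γ L : ℝ) (hw : 0 < w) {y : ℝ} (hy : |y| < 1)
    (k : ℕ) :
    HasSum (fun j ↦ L ^ k / w ^ (k * ρ + 1) * (poch (k * γ) j * y ^ j / j.factorial))
      ((L / (w ^ ρ * (1 - y) ^ γ)) ^ k / w) := by
  have h1y : 0 < 1 - y := by linarith [le_abs_self y]
  have hval : (L / (w ^ ρ * (1 - y) ^ γ)) ^ k / w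
      = L ^ k / w ^ (k * ρ + 1) * (1 - y) ^ (-(k * γ)) := by
    rw [rpow_add_one hw.ne', mul_comm (k : ℝ) ρ, rpow_mul_natCast hw.le, mul_comm (k : ℝ) γ,
      rpow_neg h1y.le, rpow_mul_natCast h1y.le, div_pow, mul_pow]
    field_simp
  rw [hval]
  exact (hasSum_poch_mul_pow_div_factorial (k * γ) hy).mul_left _

lemma summable_abs_meanTerm (hρ : 0 < ρ) (lam mu : ℝ) {t : ℝ} (ht : 0 ≤ t)
    (h : Summable fun p ↦ |meanCoeff α ρ β γ (lam - mu) p * t ^ meanExponent α ρ p|) :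
    Summable fun k ↦ |meanTerm α ρ β γ lam mu k t| := by
  rcases ht.eq_or_lt with rfl | ht
  · exact summable_of_ne_finset_zero (s := {0}) fun k hk ↦ by
      rw [meanTerm_zero_right hρ _ _ (by simpa using hk), abs_zero]
  refine h.prod.of_nonneg_of_le (fun k ↦ abs_nonneg _) fun k ↦ ?_
  rw [meanTerm_eq_tsum _ _ k ht]
  exact norm_tsum_le_tsum_norm
    (f := fun j ↦ meanCoeff α ρ β γ (lam - mu) (k, j) * t ^ meanExponent α ρ (k, j))
    (h.prod_factor k)

lemma summable_abs_meanCoeff_laplace (hα : 0 ≤ α) (hρ : 0 ≤ ρ) (hγ : 0 ≤ γ) (hw : 0 < w)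
    (hβ : |β| / w ^ α < 1) (hL : |L| < w ^ ρ * (1 - |β| / w ^ α) ^ γ) :
    Summable fun p ↦ |meanCoeff α ρ β γ L p| * Gamma (meanExponent α ρ p + 1)
      / w ^ (meanExponent α ρ p + 1) := by
  have hy : |(|β| / w ^ α)| < 1 := by rwa [abs_of_nonneg (by positivity)]
  have hfib := hasSum_pow_div_rpow_mul_poch_series ρ γ |L| hw hy
  have hq : |L| / (w ^ ρ * (1 - |β| / w ^ α) ^ γ) < 1 :=
    (div_lt_one (by linarith [abs_nonneg L])).2 hL
  refine (summable_prod_of_nonneg fun p ↦ div_nonneg (mul_nonneg (abs_nonneg _)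
    (Gamma_nonneg_of_nonneg (by linarith [meanExponent_nonneg hα hρ p]))) (rpow_nonneg hw.le _)).2
    ⟨fun k ↦ ?_, ?_⟩
  · simpa only [abs_meanCoeff_mul_Gamma_div hα hρ hγ hw] using (hfib k).summable
  · simp only [abs_meanCoeff_mul_Gamma_div hα hρ hγ hw, (hfib _).tsum_eq]
    exact (summable_geometric_of_lt_one (by positivity) hq).div_const w

lemma hasSum_meanCoeff_laplace (hα : 0 ≤ α) (hρ : 0 ≤ ρ) (hβ : 0 ≤ β) (hγ : 0 ≤ γ) (hw : 0 < w)
    (hβw : β / w ^ α < 1) (hL : |L| < w ^ ρ * (1 - β / w ^ α) ^ γ) :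
    HasSum (fun p ↦ meanCoeff α ρ β γ L p * Gamma (meanExponent α ρ p + 1)
        / w ^ (meanExponent α ρ p + 1))
      (w ^ (ρ - 1) * (1 + β / w ^ α) ^ γ / (w ^ ρ * (1 + β / w ^ α) ^ γ - L)) := by
  have habs := summable_abs_meanCoeff_laplace (L := L) hα hρ hγ hw
    (by rwa [abs_of_nonneg hβ]) (by rwa [abs_of_nonneg hβ])
  have hsum : Summable fun p ↦ meanCoeff α ρ β γ L p * Gamma (meanExponent α ρ p + 1)
      / w ^ (meanExponent α ρ p + 1) := habs.of_norm_bounded fun p ↦ by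
    rw [Real.norm_eq_abs, abs_div, abs_mul, abs_of_pos (rpow_pos_of_pos hw _),
      abs_of_nonneg (Gamma_nonneg_of_nonneg (by linarith [meanExponent_nonneg hα hρ p]))]
  set x := β / w ^ α
  have hx0 : 0 ≤ x := by positivity
  have hy : |-x| < 1 := by rwa [abs_neg, abs_of_nonneg hx0]
  have hD : |L| < w ^ ρ * (1 + x) ^ γ := hL.trans_le (by gcongr; linarith)
  have hfib : ∀ k, HasSum (fun j ↦ meanCoeff α ρ β γ L (k, j)
      * Gamma (meanExponent α ρ (k, j) + 1) / w ^ (meanExponent α ρ (k, j) + 1))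
      ((L / (w ^ ρ * (1 + x) ^ γ)) ^ k / w) := fun k ↦ by
    simpa only [meanCoeff_mul_Gamma_div hα hρ hw, sub_neg_eq_add]
      using hasSum_pow_div_rpow_mul_poch_series ρ γ L hw hy k
  have hr : |L / (w ^ ρ * (1 + x) ^ γ)| < 1 := by
    have hD0 : 0 < w ^ ρ * (1 + x) ^ γ := by positivity
    rwa [abs_div, abs_of_pos hD0, div_lt_one hD0]
  have hD0 : 0 < w ^ ρ * (1 + x) ^ γ - L := by linarith [le_abs_self L]
  convert hsum.hasSum using 1
  rw [(hsum.hasSum.prod_fiberwise hfib).unique ((hasSum_geometric_of_abs_lt_one hr).div_const w),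
    rpow_sub_one hw.ne']
  field_simp

end MeanSeries

theorem stmt3_general (α ρ β γ lam mu : ℝ) (hα : 0 < α) (hρ : 0 < ρ) (hβ : 0 < β) (hγ : 0 ≤ γ) :
    ∀ w > (0 : ℝ), β < w ^ α → |lam - mu| < w ^ ρ * (1 - β * w ^ (-α)) ^ γ →
      (∀ t ≥ (0 : ℝ), Summable fun k : ℕ => |meanTerm α ρ β γ lam mu k t|) ∧
      (∀ k : ℕ, IntegrableOn
        (fun t => Real.exp (-w * t) * meanTerm α ρ β γ lam mu k t) (Set.Ioi 0)) ∧
      ∫ t in Set.Ioi (0 : ℝ), Real.exp (-w * t) * ∑' k : ℕ, meanTerm α ρ β γ lam mu k t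
        = w ^ (ρ - 1) * (1 + β * w ^ (-α)) ^ γ
            / (w ^ ρ * (1 + β * w ^ (-α)) ^ γ - (lam - mu)) := by
  intro w hw hβw hL
  rw [rpow_neg hw.le, ← div_eq_mul_inv] at hL ⊢
  have hx : β / w ^ α < 1 := (div_lt_one (rpow_pos_of_pos hw α)).2 hβw
  have he := meanExponent_nonneg hα.le hρ.le
  have habs := summable_abs_meanCoeff_laplace (L := lam - mu) hα.le hρ.le hγ hw
    (by rwa [abs_of_pos hβ]) (by rwa [abs_of_pos hβ])
  have hpt {t : ℝ} (ht : 0 ≤ t) := summable_abs_mul_rpow_of_summable_laplace he hw habs ht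
  refine ⟨fun t ht ↦ summable_abs_meanTerm hρ lam mu ht (hpt ht), fun k ↦ ?_, ?_⟩
  · refine (integrableOn_and_hasSum_laplace_tsum_mul_rpow (fun j ↦ he (k, j)) hw
      (habs.prod_factor k)).1.congr_fun (fun t ht ↦ ?_) measurableSet_Ioi
    rw [meanTerm_eq_tsum _ _ k ht]
  · rw [(hasSum_meanCoeff_laplace hα.le hρ.le hβ.le hγ hw hx hL).unique
      (integrableOn_and_hasSum_laplace_tsum_mul_rpow he hw habs).2]
    refine setIntegral_congr_fun measurableSet_Ioi fun t ht ↦ ?_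
    simp only [meanTerm_eq_tsum _ _ _ ht, (hpt (le_of_lt ht)).of_abs.tsum_prod]

theorem stmt3 (α ρ β γ lam mu : ℝ) (hα : 0 < α) (hα1 : α ≤ 1) (hρ : 0 < ρ) (hρ1 : ρ ≤ 1)
    (hβ : 0 < β) (hγ : 0 ≤ γ) (hlam : 0 < lam) (hmu : 0 < mu) :
    ∀ w > (0 : ℝ), β < w ^ α → |lam - mu| < w ^ ρ * (1 - β * w ^ (-α)) ^ γ →
      (∀ t ≥ (0 : ℝ), Summable fun k : ℕ => |meanTerm α ρ β γ lam mu k t|) ∧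
      (∀ k : ℕ, IntegrableOn
        (fun t => Real.exp (-w * t) * meanTerm α ρ β γ lam mu k t) (Set.Ioi 0)) ∧
      ∫ t in Set.Ioi (0 : ℝ), Real.exp (-w * t) * ∑' k : ℕ, meanTerm α ρ β γ lam mu k t
        = w ^ (ρ - 1) * (1 + β * w ^ (-α)) ^ γ
            / (w ^ ρ * (1 + β * w ^ (-α)) ^ γ - (lam - mu)) :=
  stmt3_general α ρ β γ lam mu hα hρ hβ hγ
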